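/- arXiv:0711.0596 — 2 statements merged into one kernel-verified Lean document; each statement's English description precedes it below -/
import Mathlib

section
/- Let n and k be natural numbers with 0 < k < n, and let a_{k+1}, …, a_n be integers ≥ 1. Let S be the presented commutative monoid ⟨u₁,…,uₙ | u₁⋯u_k = u_{k+1}^{a_{k+1}}⋯u_n^{a_n}⟩, the quotient of (Fin n →₀ ℕ) by the additive congruence generated by the pair (w₁, w₂) with w₁ = e₁ + ⋯ + e_k and w₂ = a_{k+1}·e_{k+1} + ⋯ + a_n·e_n, and let π be the quotient map. Then S is the union of the images of the free abelian submonoids F_i = ⟨u_j : j ≠ i⟩ for 1 ≤ i ≤ k: for every s ∈ S there exist i with 1 ≤ i ≤ k and a word x ∈ (Fin n →₀ ℕ) with x(i) = 0 and π(x) = s. -/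
/-!
If `y` has all coordinates `y i` with `i < k` at least `m`, then `y ≥ m • w₁`, and applying the
relation `m` times rewrites `y` to `y - m • w₁ + m • w₂`, which is equivalent to `y` and has each
such coordinate lowered by exactly `m`. Taking `m` to be the least of these coordinates kills one.
-/

/-- The word `w₁ = e₁ + ⋯ + e_k` in the free abelian monoid `Fin n →₀ ℕ`. -/
noncomputable def wordOne (n k : ℕ) : Fin n →₀ ℕ :=
  Finsupp.equivFunOnFinite.symm fun i => if i.val < k then 1 else 0

/-- The word `w₂ = a_{k+1}·e_{k+1} + ⋯ + a_n·e_n` in the free abelian monoid `Fin n →₀ ℕ`. -/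
noncomputable def wordTwo (n k : ℕ) (a : Fin n → ℕ) : Fin n →₀ ℕ :=
  Finsupp.equivFunOnFinite.symm fun i => if k ≤ i.val then a i else 0

theorem AddCon.mk'_tsub_nsmul_add_nsmul {M : Type*} [AddCommMonoid M] [PartialOrder M]
    [ExistsAddOfLE M] [AddLeftMono M] [Sub M] [OrderedSub M] (c : AddCon M) {w w' : M}
    (h : c w w') {x : M} {m : ℕ} (hx : m • w ≤ x) :
    c.mk' (x - m • w + m • w') = c.mk' x := by
  have hrel : c (x - m • w + m • w) (x - m • w + m • w') := c.add (c.refl _) (c.nsmul m h)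
  rw [tsub_add_cancel_of_le hx] at hrel
  exact ((c.eq).mpr hrel).symm

section Words

variable {n k : ℕ}

theorem wordOne_apply (i : Fin n) : wordOne n k i = if i.val < k then 1 else 0 := by
  simp [wordOne]

theorem wordTwo_apply (a : Fin n → ℕ) (i : Fin n) :
    wordTwo n k a i = if k ≤ i.val then a i else 0 := by
  simp [wordTwo]

theorem nsmul_wordOne_le {x : Fin n →₀ ℕ} {m : ℕ} (hm : ∀ i : Fin n, i.val < k → m ≤ x i) :
    m • wordOne n k ≤ x := by
  intro i
  by_cases hi : i.val < k
  · simpa [wordOne_apply, hi] using hm i hi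
  · simp [wordOne_apply, hi]

theorem tsub_nsmul_wordOne_add_nsmul_wordTwo_apply_of_lt (a : Fin n → ℕ) (x : Fin n →₀ ℕ)
    (m : ℕ) {i : Fin n} (hi : i.val < k) :
    (x - m • wordOne n k + m • wordTwo n k a) i = x i - m := by
  simp [wordOne_apply, wordTwo_apply, hi, Nat.not_le.mpr hi]

end Words

theorem stmt2_general (n k : ℕ) (hk : 0 < k) (hkn : k < n) (a : Fin n → ℕ)
    (c : AddCon (Fin n →₀ ℕ))
    (hc : c = addConGen (fun x y => x = wordOne n k ∧ y = wordTwo n k a))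
    (s : c.Quotient) :
    ∃ i : Fin n, i.val < k ∧ ∃ x : Fin n →₀ ℕ, x i = 0 ∧ c.mk' x = s := by
  have hrel : c (wordOne n k) (wordTwo n k a) := by
    rw [hc]; exact AddConGen.Rel.of _ _ ⟨rfl, rfl⟩
  obtain ⟨y, rfl⟩ := AddCon.mk'_surjective s
  have hne : (Finset.univ.filter fun i : Fin n => i.val < k).Nonempty :=
    ⟨⟨0, hk.trans hkn⟩, by simpa using hk⟩
  obtain ⟨i, hi, hmin⟩ := Finset.exists_min_image _ y hne
  simp only [Finset.mem_filter, Finset.mem_univ, true_and] at hi hmin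
  refine ⟨i, hi, y - y i • wordOne n k + y i • wordTwo n k a, ?_, ?_⟩
  · simp [tsub_nsmul_wordOne_add_nsmul_wordTwo_apply_of_lt a y (y i) hi]
  · exact c.mk'_tsub_nsmul_add_nsmul hrel (nsmul_wordOne_le hmin)

theorem stmt2 (n k : ℕ) (hk : 0 < k) (hkn : k < n) (a : Fin n → ℕ)
    (ha : ∀ i : Fin n, k ≤ i.val → 1 ≤ a i)
    (c : AddCon (Fin n →₀ ℕ))
    (hc : c = addConGen (fun x y => x = wordOne n k ∧ y = wordTwo n k a))
    (s : c.Quotient) :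
    ∃ i : Fin n, i.val < k ∧ ∃ x : Fin n →₀ ℕ, x i = 0 ∧ c.mk' x = s :=
  stmt2_general n k hk hkn a c hc s
end

section
/- Let K be a field, let n ≥ 2, and let w₁, w₂, w₃, w₄ ∈ (Fin n →₀ ℕ) be nonzero words satisfying the independence hypothesis and conditions (a)–(d) of the two-relator normality criterion (so that K[S] is a normal domain), where S is the quotient of (Fin n →₀ ℕ) by the additive congruence generated by (w₁, w₂) and (w₃, w₄) with quotient map π. Suppose i ∈ supp(w₁) and j ∈ supp(w₂) are indices such that i ∉ supp(w₃) ∪ supp(w₄) and j ∉ supp(w₃) ∪ supp(w₄). Then the ideal Q of K[S] = AddMonoidAlgebra K S generated by the two monomials X^{π(e_i)} and X^{π(e_j)} is a prime ideal. -/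
/-!
Let `P` be the face of `ℕⁿ` of exponent vectors avoiding `x_i` and `x_j`. The words `w₁`, `w₂`
leave `P` while `w₃`, `w₄` lie in it. Choose `j₀` with `w₃ j₀ = 1` (square-freeness, after
possibly swapping `w₃` and `w₄`) and let `F : ℕⁿ → ℤⁿ` substitute `e_{j₀} ↦ e_{j₀} + w₄ - w₃`,
so that `F w₃ = F w₄`. Then `X^v ↦ X^(F v)` on `P` and `X^v ↦ 0` off `P` descends to a ring map
`K[S] → K[ℤⁿ]`. Its kernel is `Q`: the monomials off `P` are multiples of `X^{e_i}` or
`X^{e_j}`, and on `P` the map `F` separates congruence classes, since `F v = F v'` forces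
`v + k w₃ = v' + k w₄` for some `k`, and disjointness of `w₃, w₄` then gives `v ~ v'`.
As `K[ℤⁿ]` is a domain, `Q` is prime.
-/

/-- The support of a word in the free abelian monoid `Fin n →₀ ℕ`. -/
def supp {n : ℕ} (w : Fin n →₀ ℕ) : Set (Fin n) := {i | w i ≠ 0}

/-- `Hsupp w` is the set of generators occurring in `w` with exponent at least `2`;
`w` is square free iff `Hsupp w = ∅`. -/
def Hsupp {n : ℕ} (w : Fin n →₀ ℕ) : Set (Fin n) := {i | 2 ≤ w i}

/-- The supports of two words intersect nontrivially. -/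
def Overlap {n : ℕ} (v w : Fin n →₀ ℕ) : Prop := supp v ∩ supp w ≠ ∅

/-- The two relations `w₁ = w₂` and `w₃ = w₄` are independent: neither is a consequence
of the additive congruence generated by the other alone. -/
def IndependentRels {n : ℕ} (w₁ w₂ w₃ w₄ : Fin n →₀ ℕ) : Prop :=
  ¬ (addConGen fun x y => x = w₃ ∧ y = w₄) w₁ w₂ ∧
  ¬ (addConGen fun x y => x = w₁ ∧ y = w₂) w₃ w₄

/-- Condition (d) of the two-relator normality criterion, with
`O = {(i,j) : i ∈ {1,2}, j ∈ {3,4}, supp(wᵢ) ∩ supp(w_j) ≠ ∅}`: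
either `O = ∅`; or `O` is a singleton `{(i,j)}` and `Hsupp(w_{i'}) = ∅` or
`Hsupp(w_{j'}) = ∅` for the complementary indices `i', j'`; or `O` consists of exactly
two pairs sharing a common coordinate and the unique index `m` occurring in no pair of
`O` satisfies `Hsupp(w_m) = ∅`. -/
def CondD {n : ℕ} (w₁ w₂ w₃ w₄ : Fin n →₀ ℕ) : Prop :=
  -- O = ∅
  (¬ Overlap w₁ w₃ ∧ ¬ Overlap w₁ w₄ ∧ ¬ Overlap w₂ w₃ ∧ ¬ Overlap w₂ w₄) ∨
  -- O = {(i,j)} a singleton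
  (Overlap w₁ w₃ ∧ ¬ Overlap w₁ w₄ ∧ ¬ Overlap w₂ w₃ ∧ ¬ Overlap w₂ w₄ ∧
    (Hsupp w₂ = ∅ ∨ Hsupp w₄ = ∅)) ∨
  (¬ Overlap w₁ w₃ ∧ Overlap w₁ w₄ ∧ ¬ Overlap w₂ w₃ ∧ ¬ Overlap w₂ w₄ ∧
    (Hsupp w₂ = ∅ ∨ Hsupp w₃ = ∅)) ∨
  (¬ Overlap w₁ w₃ ∧ ¬ Overlap w₁ w₄ ∧ Overlap w₂ w₃ ∧ ¬ Overlap w₂ w₄ ∧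
    (Hsupp w₁ = ∅ ∨ Hsupp w₄ = ∅)) ∨
  (¬ Overlap w₁ w₃ ∧ ¬ Overlap w₁ w₄ ∧ ¬ Overlap w₂ w₃ ∧ Overlap w₂ w₄ ∧
    (Hsupp w₁ = ∅ ∨ Hsupp w₃ = ∅)) ∨
  -- O consists of exactly two pairs sharing a common coordinate
  (Overlap w₁ w₃ ∧ Overlap w₁ w₄ ∧ ¬ Overlap w₂ w₃ ∧ ¬ Overlap w₂ w₄ ∧ Hsupp w₂ = ∅) ∨
  (¬ Overlap w₁ w₃ ∧ ¬ Overlap w₁ w₄ ∧ Overlap w₂ w₃ ∧ Overlap w₂ w₄ ∧ Hsupp w₁ = ∅) ∨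
  (Overlap w₁ w₃ ∧ ¬ Overlap w₁ w₄ ∧ Overlap w₂ w₃ ∧ ¬ Overlap w₂ w₄ ∧ Hsupp w₄ = ∅) ∨
  (¬ Overlap w₁ w₃ ∧ Overlap w₁ w₄ ∧ ¬ Overlap w₂ w₃ ∧ Overlap w₂ w₄ ∧ Hsupp w₃ = ∅)


open AddMonoidAlgebra

namespace AddMonoidAlgebra

section Monomial

variable {K G : Type*} [Semiring K] [Nontrivial K]

theorem of'_ne_zero (g : G) : of' K G g ≠ 0 :=
  single_ne_zero.2 one_ne_zero

theorem of'_injective : Function.Injective (of' K G) :=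
  single_left_injective one_ne_zero

end Monomial

variable {K S G : Type*} [CommSemiring K] [Nontrivial K] [AddCommMonoid S] [AddCommMonoid G]
  {f : Multiplicative S →* AddMonoidAlgebra K G}

theorem coeff_lift_eq_coeff_of_injOn (hf : ∀ s, f s = 0 ∨ ∃ g, f s = of' K G g)
    (hinj : Set.InjOn f {s | f s ≠ 0}) {m : S} {g : G} (hm : f (.ofAdd m) = of' K G g)
    (x : AddMonoidAlgebra K S) :
    (lift K (AddMonoidAlgebra K G) S f x).coeff g = x.coeff m := by
  have hoff : ∀ s, s ≠ m → (f (.ofAdd s)).coeff g = 0 := by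
    intro s hs
    rcases hf (.ofAdd s) with h | ⟨g', h⟩
    · simp [h]
    · have hg' : g' ≠ g := by
        rintro rfl
        have hs₀ : f (.ofAdd s) ≠ 0 := h ▸ of'_ne_zero g'
        have hm₀ : f (.ofAdd m) ≠ 0 := hm ▸ of'_ne_zero g'
        exact hs (hinj hs₀ hm₀ (h.trans hm.symm))
      simp [h, of'_apply, coeff_single, hg']
  rw [lift_apply, coeff_finsuppSum, Finsupp.sum_apply, Finsupp.sum_eq_single m]
  · simp [hm, of'_apply, coeff_single]
  · intro s _ hs
    simp [hoff s hs]
  · simp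

theorem ker_lift_eq_span_of' (hf : ∀ s, f s = 0 ∨ ∃ g, f s = of' K G g)
    (hinj : Set.InjOn f {s | f s ≠ 0}) :
    RingHom.ker (lift K (AddMonoidAlgebra K G) S f) =
      Ideal.span (of' K S '' {s | f (.ofAdd s) = 0}) := by
  refine le_antisymm (fun x hx => ?_) ?_
  · refine mem_ideal_span_of'_image.2 fun m hm => ⟨m, ?_, 0, (zero_add m).symm⟩
    refine (hf (.ofAdd m)).resolve_right fun ⟨g, hg⟩ => Finsupp.mem_support_iff.1 hm ?_
    rw [← coeff_lift_eq_coeff_of_injOn hf hinj hg, RingHom.mem_ker.1 hx]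
    rfl
  · rw [Ideal.span_le]
    rintro _ ⟨s, hs, rfl⟩
    simpa [lift_of'] using hs

end AddMonoidAlgebra

section FaceHom

variable (K : Type*) {M G : Type*} [CommSemiring K] [AddCommMonoid M] [AddCommMonoid G]

noncomputable def faceHom (P : AddSubmonoid M) (hP : ∀ a b, a + b ∈ P → a ∈ P) (F : M →+ G) :
    Multiplicative M →* AddMonoidAlgebra K G where
  toFun v := (P : Set M).indicator (fun v => of' K G (F v)) v.toAdd
  map_one' := by simp [P.zero_mem, of'_apply, one_def]
  map_mul' a b := by
    have hP' : ∀ a b, a + b ∈ P → b ∈ P := fun a b h => hP b a (add_comm a b ▸ h)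
    by_cases ha : a.toAdd ∈ P <;> by_cases hb : b.toAdd ∈ P
    · simp [Set.indicator_of_mem, ha, hb, P.add_mem ha hb, of'_apply, single_mul_single]
    all_goals simp [Set.indicator_of_notMem, ha, hb, mt (hP _ _), mt (hP' _ _)]

variable {K} {P : AddSubmonoid M} {hP : ∀ a b, a + b ∈ P → a ∈ P} {F : M →+ G}

theorem faceHom_of_mem {v : M} (hv : v ∈ P) : faceHom K P hP F (.ofAdd v) = of' K G (F v) :=
  Set.indicator_of_mem hv fun v => of' K G (F v)

theorem faceHom_of_notMem {v : M} (hv : v ∉ P) : faceHom K P hP F (.ofAdd v) = 0 :=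
  Set.indicator_of_notMem hv fun v => of' K G (F v)

theorem faceHom_eq_zero_iff [Nontrivial K] {v : M} : faceHom K P hP F (.ofAdd v) = 0 ↔ v ∉ P := by
  by_cases hv : v ∈ P
  · simp [faceHom_of_mem hv, hv]
  · simp [faceHom_of_notMem hv, hv]

end FaceHom

section Coordinates

variable {ι : Type*}

def coordFace (A : Set ι) : AddSubmonoid (ι →₀ ℕ) where
  carrier := {v | ∀ k ∈ A, v k = 0}
  add_mem' hv hw k hk := by simp [hv k hk, hw k hk]
  zero_mem' _ _ := rfl

theorem mem_coordFace {A : Set ι} {v : ι →₀ ℕ} : v ∈ coordFace A ↔ ∀ k ∈ A, v k = 0 := Iff.rfl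

theorem mem_coordFace_of_add_mem {A : Set ι} {v w : ι →₀ ℕ} (h : v + w ∈ coordFace A) :
    v ∈ coordFace A := fun k hk => Nat.eq_zero_of_add_eq_zero_right (h k hk)

theorem exists_eq_single_add_of_notMem_coordFace {A : Set ι} {v : ι →₀ ℕ}
    (hv : v ∉ coordFace A) : ∃ k ∈ A, ∃ u, v = Finsupp.single k 1 + u := by
  obtain ⟨k, hk, hvk⟩ : ∃ k ∈ A, v k ≠ 0 := by simpa [mem_coordFace] using hv
  refine ⟨k, hk, v - Finsupp.single k 1, (add_tsub_cancel_of_le ?_).symm⟩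
  rw [Finsupp.single_le_iff]
  omega

end Coordinates

section FinCoordinates

variable {n : ℕ}

theorem supp_eq_coe_support (w : Fin n →₀ ℕ) : supp w = w.support := by
  ext; simp [supp]

theorem exists_eq_one_of_Hsupp_eq_empty {w : Fin n →₀ ℕ} (hw : w ≠ 0) (h : Hsupp w = ∅) :
    ∃ k, w k = 1 := by
  obtain ⟨k, hk⟩ := Finsupp.ne_iff.1 hw
  have hk₂ : ¬ 2 ≤ w k := fun h₂ => (h ▸ h₂ : k ∈ (∅ : Set (Fin n)))
  exact ⟨k, by simp only [Finsupp.coe_zero, Pi.zero_apply] at hk; omega⟩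

end FinCoordinates

section Elimination

variable {ι : Type*} (ws wt : ι →₀ ℕ) (j₀ : ι)

-- The substitution `e_{j₀} ↦ e_{j₀} + wt - ws`, eliminating `x_{j₀}` by the relation `ws = wt`.
noncomputable def elimHom : (ι →₀ ℕ) →+ (ι → ℤ) :=
  AddMonoidHom.mk' (fun v a => v a + v j₀ * ((wt a : ℤ) - ws a))
    (fun v w => by ext a; simp only [Finsupp.add_apply, Nat.cast_add, Pi.add_apply]; ring)

variable {ws wt j₀}

theorem elimHom_apply (v : ι →₀ ℕ) (a : ι) :
    elimHom ws wt j₀ v a = v a + v j₀ * ((wt a : ℤ) - ws a) := rfl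

theorem elimHom_left_eq_right (hs : ws j₀ = 1) (ht : wt j₀ = 0) :
    elimHom ws wt j₀ ws = elimHom ws wt j₀ wt := by
  ext a
  simp only [elimHom_apply, hs, ht]
  ring

theorem add_nsmul_eq_of_elimHom_eq {v v' : ι →₀ ℕ} (h : elimHom ws wt j₀ v = elimHom ws wt j₀ v')
    (hle : v j₀ ≤ v' j₀) : v + (v' j₀ - v j₀) • ws = v' + (v' j₀ - v j₀) • wt := by
  ext a
  have ha := congrFun h a
  simp only [elimHom_apply] at ha
  simp only [Finsupp.add_apply, Finsupp.smul_apply, smul_eq_mul]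
  zify [hle]
  linear_combination ha

theorem AddCon.rel_of_add_nsmul_eq (c : AddCon (ι →₀ ℕ)) (hc : c ws wt)
    (hdisj : Disjoint ws.support wt.support) {v v' : ι →₀ ℕ} {k : ℕ} (h : v + k • ws = v' + k • wt) :
    c v v' := by
  have hle : k • wt ≤ v := fun a => by
    have ha := congrArg (· a) h
    simp only [Finsupp.add_apply, Finsupp.smul_apply, smul_eq_mul] at ha
    by_cases hs : ws a = 0
    · simp only [Finsupp.smul_apply, smul_eq_mul]
      rw [hs, mul_zero, add_zero] at ha
      omega
    · have ht : wt a = 0 := Finsupp.notMem_support_iff.1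
        (Finset.disjoint_left.1 hdisj (Finsupp.mem_support_iff.2 hs))
      simp [ht]
  obtain ⟨m, rfl⟩ := exists_add_of_le hle
  have hv' : v' = k • ws + m := by
    apply add_right_cancel (b := k • wt)
    rw [← h]
    abel
  rw [hv']
  exact c.add (c.symm (c.nsmul k hc)) (c.refl m)

theorem AddCon.rel_of_elimHom_eq (c : AddCon (ι →₀ ℕ)) (hc : c ws wt)
    (hdisj : Disjoint ws.support wt.support) {v v' : ι →₀ ℕ}
    (h : elimHom ws wt j₀ v = elimHom ws wt j₀ v') : c v v' := by
  rcases le_total (v j₀) (v' j₀) with hle | hle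
  · exact c.rel_of_add_nsmul_eq hc hdisj (add_nsmul_eq_of_elimHom_eq h hle)
  · exact c.symm (c.rel_of_add_nsmul_eq hc hdisj (add_nsmul_eq_of_elimHom_eq h.symm hle))

end Elimination

section Presentation

variable {K M G : Type*} [CommRing K] [IsDomain K] [AddCommMonoid M] [AddCommMonoid G]
  [UniqueSums G]

theorem isPrime_span_of'_mk_compl (c : AddCon M) {P : AddSubmonoid M}
    {hP : ∀ a b, a + b ∈ P → a ∈ P} {F : M →+ G}
    (hc : c ≤ AddCon.ker (faceHom K P hP F).toAdditiveRight)
    (hinj : ∀ v ∈ P, ∀ w ∈ P, F v = F w → c v w) :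
    (Ideal.span (of' K c.Quotient '' (c.mk' '' (P : Set M)ᶜ))).IsPrime := by
  set f := AddMonoidHom.toMultiplicativeLeft (c.lift (faceHom K P hP F).toAdditiveRight hc)
  have hf : ∀ v, f (.ofAdd (c.mk' v)) = faceHom K P hP F (.ofAdd v) := fun _ => rfl
  have hsurj : ∀ s : Multiplicative c.Quotient, ∃ v, s = .ofAdd (c.mk' v) :=
    fun s => (c.mk'_surjective s.toAdd).imp fun v hv => by rw [hv]; rfl
  have hzero : {s | f (.ofAdd s) = 0} = c.mk' '' (P : Set M)ᶜ := by
    ext s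
    obtain ⟨v, rfl⟩ := c.mk'_surjective s
    refine ⟨fun hv => ⟨v, faceHom_eq_zero_iff.1 ((hf v).symm.trans hv), rfl⟩, ?_⟩
    rintro ⟨w, hw, hwv⟩
    show f (.ofAdd (c.mk' v)) = 0
    rw [← hwv, hf, faceHom_of_notMem hw]
  have hmonomial : ∀ s, f s = 0 ∨ ∃ g, f s = of' K G g := by
    intro s
    obtain ⟨v, rfl⟩ := hsurj s
    by_cases hv : v ∈ P
    · exact .inr ⟨F v, (hf v).trans (faceHom_of_mem hv)⟩
    · exact .inl ((hf v).trans (faceHom_of_notMem hv))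
  have hinjOn : Set.InjOn f {s | f s ≠ 0} := by
    intro s hs t ht hst
    obtain ⟨v, rfl⟩ := hsurj s
    obtain ⟨w, rfl⟩ := hsurj t
    simp only [Set.mem_ofPred_eq, hf, ne_eq, faceHom_eq_zero_iff, not_not] at hs ht
    rw [hf, hf, faceHom_of_mem hs, faceHom_of_mem ht] at hst
    exact congrArg _ (c.eq.2 (hinj v hs w ht (of'_injective hst)))
  rw [← hzero, ← ker_lift_eq_span_of' hmonomial hinjOn]
  exact RingHom.ker_isPrime _

end Presentation

theorem span_of'_mk_compl_coordFace {K ι : Type*} [CommSemiring K] (c : AddCon (ι →₀ ℕ))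
    (A : Set ι) :
    Ideal.span (of' K c.Quotient '' (c.mk' '' (coordFace A : Set (ι →₀ ℕ))ᶜ)) =
      Ideal.span ((fun k => of' K c.Quotient (c.mk' (Finsupp.single k 1))) '' A) := by
  refine le_antisymm (Ideal.span_le.2 ?_) (Ideal.span_mono ?_)
  · rintro _ ⟨_, ⟨v, hv, rfl⟩, rfl⟩
    obtain ⟨k, hk, u, rfl⟩ := exists_eq_single_add_of_notMem_coordFace hv
    rw [map_add, of'_apply, ← mul_one (1 : K), ← single_mul_single, ← of'_apply]
    exact Ideal.mul_mem_right _ _ (Ideal.subset_span ⟨k, hk, rfl⟩)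
  · rintro _ ⟨k, hk, rfl⟩
    exact ⟨_, ⟨Finsupp.single k 1, fun h => by simpa using h k hk, rfl⟩, rfl⟩

theorem addConGen_pair_swap_right {M : Type*} [Add M] (a b x y : M) :
    addConGen (fun u v => (u = a ∧ v = b) ∨ (u = x ∧ v = y)) =
      addConGen (fun u v => (u = a ∧ v = b) ∨ (u = y ∧ v = x)) := by
  refine le_antisymm (AddCon.addConGen_le.2 ?_) (AddCon.addConGen_le.2 ?_) <;>
    rintro _ _ (⟨rfl, rfl⟩ | ⟨rfl, rfl⟩)
  all_goals first
    | exact AddConGen.Rel.of _ _ (.inl ⟨rfl, rfl⟩)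
    | exact AddConGen.Rel.symm (AddConGen.Rel.of _ _ (.inr ⟨rfl, rfl⟩))

theorem isPrime_span_of'_mk_single (K : Type*) [CommRing K] [IsDomain K] {n : ℕ}
    {w₁ w₂ w₃ w₄ : Fin n →₀ ℕ} {c : AddCon (Fin n →₀ ℕ)}
    (hc : c = addConGen fun x y => (x = w₁ ∧ y = w₂) ∨ (x = w₃ ∧ y = w₄))
    {A : Set (Fin n)} (h₁ : ∃ k ∈ A, k ∈ supp w₁) (h₂ : ∃ k ∈ A, k ∈ supp w₂)
    (hA : ∀ k ∈ A, k ∉ supp w₃ ∪ supp w₄) (h₃₄ : supp w₃ ∩ supp w₄ = ∅) {j₀ : Fin n}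
    (h₃ : w₃ j₀ = 1) :
    (Ideal.span ((fun k => of' K c.Quotient (c.mk' (Finsupp.single k 1))) '' A)).IsPrime := by
  have hdisj : Disjoint w₃.support w₄.support := by
    rwa [supp_eq_coe_support, supp_eq_coe_support, ← Finset.coe_inter, Finset.coe_eq_empty,
      ← Finset.disjoint_iff_inter_eq_empty] at h₃₄
  have h₄ : w₄ j₀ = 0 :=
    Finsupp.notMem_support_iff.1 (Finset.disjoint_left.1 hdisj (by simp [h₃]))
  have hnotMem : ∀ w : Fin n →₀ ℕ, (∃ k ∈ A, k ∈ supp w) → w ∉ coordFace A :=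
    fun w ⟨k, hkA, hk⟩ hw => hk (hw k hkA)
  have hmem₃ : w₃ ∈ coordFace A := fun k hk => not_not.1 fun h => hA k hk (.inl h)
  have hmem₄ : w₄ ∈ coordFace A := fun k hk => not_not.1 fun h => hA k hk (.inr h)
  rw [← span_of'_mk_compl_coordFace]
  refine isPrime_span_of'_mk_compl (G := Fin n → ℤ) c (F := elimHom w₃ w₄ j₀)
    (hP := fun _ _ => mem_coordFace_of_add_mem) ?_ fun v _ w _ h => ?_
  · rw [hc, AddCon.addConGen_le]
    rintro _ _ (⟨rfl, rfl⟩ | ⟨rfl, rfl⟩) <;> rw [AddCon.ker_rel]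
    · simp [faceHom_of_notMem (hnotMem _ h₁), faceHom_of_notMem (hnotMem _ h₂)]
    · simp [faceHom_of_mem hmem₃, faceHom_of_mem hmem₄, elimHom_left_eq_right h₃ h₄]
  · have hc₃₄ : c w₃ w₄ := hc ▸ AddConGen.Rel.of _ _ (.inr ⟨rfl, rfl⟩)
    exact c.rel_of_elimHom_eq hc₃₄ hdisj h

theorem stmt10_general (K : Type*) [Field K] (n : ℕ)
    (w₁ w₂ w₃ w₄ : Fin n →₀ ℕ)
    (h₃ : w₃ ≠ 0) (h₄ : w₄ ≠ 0)
    (ha : supp w₁ ∩ supp w₂ = ∅ ∧ supp w₃ ∩ supp w₄ = ∅)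
    (hcnd : Hsupp w₃ = ∅ ∨ Hsupp w₄ = ∅)
    (c : AddCon (Fin n →₀ ℕ))
    (hc : c = addConGen (fun x y => (x = w₁ ∧ y = w₂) ∨ (x = w₃ ∧ y = w₄)))
    (i j : Fin n) (hi : i ∈ supp w₁) (hj : j ∈ supp w₂)
    (hi' : i ∉ supp w₃ ∪ supp w₄) (hj' : j ∉ supp w₃ ∪ supp w₄) :
    (Ideal.span
      {AddMonoidAlgebra.of' K c.Quotient (c.mk' (Finsupp.single i 1)),
       AddMonoidAlgebra.of' K c.Quotient (c.mk' (Finsupp.single j 1))}).IsPrime := by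
  have h₁ : ∃ k ∈ ({i, j} : Set (Fin n)), k ∈ supp w₁ := ⟨i, .inl rfl, hi⟩
  have h₂ : ∃ k ∈ ({i, j} : Set (Fin n)), k ∈ supp w₂ := ⟨j, .inr rfl, hj⟩
  have hA : ∀ k ∈ ({i, j} : Set (Fin n)), k ∉ supp w₃ ∪ supp w₄ := by
    rintro k (rfl | rfl) <;> assumption
  rw [← Set.image_pair (fun k => of' K c.Quotient (c.mk' (Finsupp.single k 1)))]
  rcases hcnd with h | h
  · obtain ⟨j₀, h₀⟩ := exists_eq_one_of_Hsupp_eq_empty h₃ h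
    exact isPrime_span_of'_mk_single K hc h₁ h₂ hA ha.2 h₀
  · obtain ⟨j₀, h₀⟩ := exists_eq_one_of_Hsupp_eq_empty h₄ h
    rw [addConGen_pair_swap_right] at hc
    rw [Set.union_comm] at hA
    exact isPrime_span_of'_mk_single K hc h₁ h₂ hA (Set.inter_comm _ _ ▸ ha.2) h₀

theorem stmt10 (K : Type*) [Field K] (n : ℕ) (hn : 2 ≤ n)
    (w₁ w₂ w₃ w₄ : Fin n →₀ ℕ)
    (h₁ : w₁ ≠ 0) (h₂ : w₂ ≠ 0) (h₃ : w₃ ≠ 0) (h₄ : w₄ ≠ 0)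
    (hind : IndependentRels w₁ w₂ w₃ w₄)
    (ha : supp w₁ ∩ supp w₂ = ∅ ∧ supp w₃ ∩ supp w₄ = ∅)
    (hb : Hsupp w₁ = ∅ ∨ Hsupp w₂ = ∅)
    (hcnd : Hsupp w₃ = ∅ ∨ Hsupp w₄ = ∅)
    (hd : CondD w₁ w₂ w₃ w₄)
    (c : AddCon (Fin n →₀ ℕ))
    (hc : c = addConGen (fun x y => (x = w₁ ∧ y = w₂) ∨ (x = w₃ ∧ y = w₄)))
    (i j : Fin n) (hi : i ∈ supp w₁) (hj : j ∈ supp w₂)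
    (hi' : i ∉ supp w₃ ∪ supp w₄) (hj' : j ∉ supp w₃ ∪ supp w₄) :
    (Ideal.span
      {AddMonoidAlgebra.of' K c.Quotient (c.mk' (Finsupp.single i 1)),
       AddMonoidAlgebra.of' K c.Quotient (c.mk' (Finsupp.single j 1))}).IsPrime :=
  stmt10_general K n w₁ w₂ w₃ w₄ h₃ h₄ ha hcnd c hc i j hi hj hi' hj'
end
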